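/- arXiv:2203.16351 — 3 statements merged into one kernel-verified Lean document; each statement's English description precedes it below -/
import Mathlib

section
/- Let (C, •, η, μ) be a left M-actegory over a monoidal category (M, j, ⊗). Define the category C_s whose objects are pairs (m, c) with m an object of M and c an object of C, and whose morphisms (m,c) → (n,d) are the morphisms m • c ⟶ n • d of C, with composition and identities inherited from C. Then: (a) the assignment m' ⊙ (m,c) := (m' ⊗ m, c), acting on a morphism pair (g : m' ⟶ n' in M, φ : m • c ⟶ n • d in C) by μ⁻¹_{m',m,c} ≫ (g • φ) ≫ μ_{n',n,d}, together with unitor given by λ_m⁻¹ • 𝟙_c : m • c ⟶ (j ⊗ m) • c and multiplicator given by α⁻¹_{m'',m',m} • 𝟙_c, is a left M-actegory structure on C_s; and (b) the functor S : C_s ⥤ C with S(m,c) := m • c and identity action on morphisms, equipped with the lineator μ_{m',m,c} : m' • S(m,c) ⟶ S(m' ⊗ m, c), is a strong M-linear functor which is an equivalence of categories (fully faithful and essentially surjective). -/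
open CategoryTheory Category MonoidalCategory

universe v₁ v₂ v₃ u₁ u₂ u₃

variable (M : Type u₁) [Category.{v₁} M] [MonoidalCategory M]
variable (C : Type u₂) [Category.{v₂} C]

/-- The data of a left actegory. -/
structure LeftActegoryData where
  actObj : M → C → C
  actHom : ∀ {m n : M} {c d : C}, (m ⟶ n) → (c ⟶ d) → (actObj m c ⟶ actObj n d)
  η : ∀ c : C, c ⟶ actObj (𝟙_ M) c
  η' : ∀ c : C, actObj (𝟙_ M) c ⟶ c
  μ : ∀ (m n : M) (c : C), actObj m (actObj n c) ⟶ actObj (m ⊗ n) c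
  μ' : ∀ (m n : M) (c : C), actObj (m ⊗ n) c ⟶ actObj m (actObj n c)

variable {M C}

/-- The laws of a left actegory. -/
structure IsLeftActegory (A : LeftActegoryData M C) : Prop where
  actHom_id : ∀ (m : M) (c : C), A.actHom (𝟙 m) (𝟙 c) = 𝟙 (A.actObj m c)
  actHom_comp : ∀ {m n p : M} {c d e : C} (g : m ⟶ n) (g' : n ⟶ p) (f : c ⟶ d) (f' : d ⟶ e),
      A.actHom (g ≫ g') (f ≫ f') = A.actHom g f ≫ A.actHom g' f'
  η_iso : ∀ c, A.η c ≫ A.η' c = 𝟙 c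
  η'_iso : ∀ c, A.η' c ≫ A.η c = 𝟙 _
  μ_iso : ∀ m n c, A.μ m n c ≫ A.μ' m n c = 𝟙 _
  μ'_iso : ∀ m n c, A.μ' m n c ≫ A.μ m n c = 𝟙 _
  η_nat : ∀ {c d : C} (f : c ⟶ d), f ≫ A.η d = A.η c ≫ A.actHom (𝟙 (𝟙_ M)) f
  μ_nat : ∀ {m m' n n' : M} {c c' : C} (g : m ⟶ m') (h : n ⟶ n') (f : c ⟶ c'),
      A.actHom g (A.actHom h f) ≫ A.μ m' n' c' = A.μ m n c ≫ A.actHom (g ⊗ₘ h) f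
  pentagon : ∀ (m n p : M) (c : C),
      A.μ m n (A.actObj p c) ≫ A.μ (m ⊗ n) p c ≫ A.actHom (α_ m n p).hom (𝟙 c)
        = A.actHom (𝟙 m) (A.μ n p c) ≫ A.μ m (n ⊗ p) c
  triangle_left : ∀ (m : M) (c : C),
      A.η (A.actObj m c) ≫ A.μ (𝟙_ M) m c = A.actHom (λ_ m).inv (𝟙 c)
  triangle_right : ∀ (m : M) (c : C),
      A.actHom (𝟙 m) (A.η c) ≫ A.μ m (𝟙_ M) c = A.actHom (ρ_ m).inv (𝟙 c)


variable (M) in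
/-- The data of a lax linear functor: a functor together with a lineator. -/
structure LaxLinearData {D : Type u₃} [Category.{v₃} D]
    (A : LeftActegoryData M C) (B : LeftActegoryData M D) where
  F : C ⥤ D
  lin : ∀ (m : M) (c : C), B.actObj m (F.obj c) ⟶ F.obj (A.actObj m c)

/-- The laws of a lax linear functor. -/
structure IsLaxLinear {D : Type u₃} [Category.{v₃} D]
    {A : LeftActegoryData M C} {B : LeftActegoryData M D}
    (L : LaxLinearData M A B) : Prop where
  lin_nat : ∀ {m n : M} {c d : C} (g : m ⟶ n) (f : c ⟶ d),
      B.actHom g (L.F.map f) ≫ L.lin n d = L.lin m c ≫ L.F.map (A.actHom g f)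
  lin_unit : ∀ c : C, B.η (L.F.obj c) ≫ L.lin (𝟙_ M) c = L.F.map (A.η c)
  lin_mult : ∀ (m n : M) (c : C),
      B.μ m n (L.F.obj c) ≫ L.lin (m ⊗ n) c
        = B.actHom (𝟙 m) (L.lin n c) ≫ L.lin m (A.actObj n c) ≫ L.F.map (A.μ m n c)

variable (M C)

/-- The underlying type of the strictification of an actegory `(C, •)`:
objects are pairs `(m, c)` of a scalar and an object. -/
structure Strictification (A : LeftActegoryData M C) where
  m : M
  c : C

variable {M C}

/-- Morphisms `(m, c) → (n, d)` in the strictification are morphisms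
`m • c ⟶ n • d` of `C`. -/
instance (A : LeftActegoryData M C) : Category (Strictification M C A) where
  Hom x y := A.actObj x.m x.c ⟶ A.actObj y.m y.c
  id x := 𝟙 (A.actObj x.m x.c)
  comp f g := f ≫ g

/-- The action of `M` on the strictification: `m' ⊙ (m, c) := (m' ⊗ m, c)`,
acting on morphisms by conjugation with the multiplicator, with unitor
`λ⁻¹ • 𝟙` and multiplicator `α⁻¹ • 𝟙`. -/
def strictData (A : LeftActegoryData M C) :
    LeftActegoryData M (Strictification M C A) where
  actObj m' x := ⟨m' ⊗ x.m, x.c⟩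
  actHom {m' n'} {x y} g φ :=
    show A.actObj (m' ⊗ x.m) x.c ⟶ A.actObj (n' ⊗ y.m) y.c from
      A.μ' m' x.m x.c ≫ A.actHom g φ ≫ A.μ n' y.m y.c
  η x := A.actHom (λ_ x.m).inv (𝟙 x.c)
  η' x := A.actHom (λ_ x.m).hom (𝟙 x.c)
  μ m'' m' x := A.actHom (α_ m'' m' x.m).inv (𝟙 x.c)
  μ' m'' m' x := A.actHom (α_ m'' m' x.m).hom (𝟙 x.c)

/-- The comparison functor `S : C_s ⥤ C`, `(m, c) ↦ m • c`, identity on morphisms. -/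
def strictFunctor (A : LeftActegoryData M C) : Strictification M C A ⥤ C where
  obj x := A.actObj x.m x.c
  map φ := φ
  map_id _ := rfl
  map_comp _ _ := rfl

/-!
Every law of the strictified action is a law of `C` conjugated by the multiplicator `μ`:
naturality of the new multiplicator `α⁻¹ • 𝟙` is the naturality of `μ` transported along
the pentagon of `C`, and the new pentagon and triangles reduce, after cancelling `μ` against
`μ⁻¹`, to equalities `u • 𝟙_c = v • 𝟙_c` between parallel structure morphisms `u, v` of `M`,
which hold by monoidal coherence. The comparison functor is the identity on morphisms, and
`c ≅ 𝟙_M • c` through the unitor makes it essentially surjective.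
-/

def strictLinearData (A : LeftActegoryData M C) : LaxLinearData M (strictData A) A where
  F := strictFunctor A
  lin m' x := A.μ m' x.m x.c

instance (A : LeftActegoryData M C) : (strictFunctor A).Full := ⟨fun φ => ⟨φ, rfl⟩⟩

instance (A : LeftActegoryData M C) : (strictFunctor A).Faithful := ⟨id⟩

namespace IsLeftActegory

variable {A : LeftActegoryData M C} (hA : IsLeftActegory A)
include hA

theorem actHom_comp_actHom {m n p : M} {c d e : C} (g : m ⟶ n) (g' : n ⟶ p) (f : c ⟶ d)
    (f' : d ⟶ e) : A.actHom g f ≫ A.actHom g' f' = A.actHom (g ≫ g') (f ≫ f') :=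
  (hA.actHom_comp g g' f f').symm

theorem μ_μ'_assoc {m n : M} {c X : C} (f : A.actObj m (A.actObj n c) ⟶ X) :
    A.μ m n c ≫ A.μ' m n c ≫ f = f := by
  rw [← assoc, hA.μ_iso, id_comp]

theorem μ'_μ_assoc {m n : M} {c X : C} (f : A.actObj (m ⊗ n) c ⟶ X) :
    A.μ' m n c ≫ A.μ m n c ≫ f = f := by
  rw [← assoc, hA.μ'_iso, id_comp]

@[simps]
def actIso {m n : M} {c d : C} (e : m ≅ n) (f : c ≅ d) : A.actObj m c ≅ A.actObj n d where
  hom := A.actHom e.hom f.hom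
  inv := A.actHom e.inv f.inv
  hom_inv_id := by rw [hA.actHom_comp_actHom, e.hom_inv_id, f.hom_inv_id, hA.actHom_id]
  inv_hom_id := by rw [hA.actHom_comp_actHom, e.inv_hom_id, f.inv_hom_id, hA.actHom_id]

@[simps]
def μIso (m n : M) (c : C) : A.actObj m (A.actObj n c) ≅ A.actObj (m ⊗ n) c where
  hom := A.μ m n c
  inv := A.μ' m n c
  hom_inv_id := hA.μ_iso m n c
  inv_hom_id := hA.μ'_iso m n c

theorem μ'_actHom_actHom_μ {m m' n n' : M} {c c' : C} (g : m ⟶ m') (h : n ⟶ n') (f : c ⟶ c') :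
    A.μ' m n c ≫ A.actHom g (A.actHom h f) ≫ A.μ m' n' c' = A.actHom (g ⊗ₘ h) f := by
  rw [hA.μ_nat, hA.μ'_μ_assoc]

theorem μ'_actHom_μ {m n : M} (g : m ⟶ n) (p : M) (c : C) :
    A.μ' m p c ≫ A.actHom g (𝟙 (A.actObj p c)) ≫ A.μ n p c = A.actHom (g ▷ p) (𝟙 c) := by
  rw [← hA.actHom_id, hA.μ'_actHom_actHom_μ, tensorHom_id]

theorem pentagon_inv (m n p : M) (c : C) :
    A.actHom (𝟙 m) (A.μ n p c) ≫ A.μ m (n ⊗ p) c ≫ A.actHom (α_ m n p).inv (𝟙 c)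
      = A.μ m n (A.actObj p c) ≫ A.μ (m ⊗ n) p c := by
  rw [← assoc, ← hA.pentagon]
  simp only [assoc, hA.actHom_comp_actHom, Iso.hom_inv_id, comp_id, hA.actHom_id]

theorem pentagon_μ' (m n p : M) (c : C) :
    A.μ' m (n ⊗ p) c ≫ A.actHom (𝟙 m) (A.μ' n p c)
      = A.actHom (α_ m n p).inv (𝟙 c) ≫ A.μ' (m ⊗ n) p c ≫ A.μ' m n (A.actObj p c) := by
  have h := Iso.ext (α := hA.actIso (Iso.refl m) (hA.μIso n p c) ≪≫ hA.μIso m (n ⊗ p) c)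
    (β := hA.μIso m n _ ≪≫ hA.μIso (m ⊗ n) p c ≪≫ hA.actIso (α_ m n p) (Iso.refl c))
    (by simpa using (hA.pentagon m n p c).symm)
  simpa using congrArg Iso.inv h

theorem strictData_η_nat {x y : Strictification M C A} (f : x ⟶ y) :
    f ≫ (strictData A).η y = (strictData A).η x ≫ (strictData A).actHom (𝟙 (𝟙_ M)) f := by
  dsimp [strictData, instCategoryStrictification, CategoryStruct.comp]
  rw [← hA.triangle_left y.m y.c, ← hA.triangle_left x.m x.c, reassoc_of% hA.η_nat f,
    assoc, hA.μ_μ'_assoc]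

theorem strictData_μ_nat {m m' n n' : M} {x y : Strictification M C A} (g : m ⟶ m')
    (h : n ⟶ n') (f : x ⟶ y) :
    (strictData A).actHom g ((strictData A).actHom h f) ≫ (strictData A).μ m' n' y
      = (strictData A).μ m n x ≫ (strictData A).actHom (g ⊗ₘ h) f := by
  dsimp [strictData, instCategoryStrictification, CategoryStruct.comp]
  have hsplit : A.actHom (𝟙 m) (A.μ' n x.m x.c) ≫ A.actHom g (A.actHom h f) ≫
        A.actHom (𝟙 m') (A.μ n' y.m y.c)
      = A.actHom g (A.μ' n x.m x.c ≫ A.actHom h f ≫ A.μ n' y.m y.c) := by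
    simp only [hA.actHom_comp_actHom, id_comp, comp_id]
  rw [← hsplit]
  simp only [assoc]
  rw [hA.pentagon_inv, reassoc_of% hA.μ_nat g h f, reassoc_of% hA.pentagon_μ', hA.μ'_μ_assoc]

theorem strictData_pentagon (m n p : M) (x : Strictification M C A) :
    (strictData A).μ m n ((strictData A).actObj p x) ≫ (strictData A).μ (m ⊗ n) p x ≫
        (strictData A).actHom (α_ m n p).hom (𝟙 x)
      = (strictData A).actHom (𝟙 m) ((strictData A).μ n p x) ≫ (strictData A).μ m (n ⊗ p) x := by
  dsimp [strictData, instCategoryStrictification, CategoryStruct.id, CategoryStruct.comp]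
  rw [hA.μ'_actHom_μ, hA.μ'_actHom_actHom_μ]
  simp only [hA.actHom_comp_actHom, comp_id]
  congr 1
  monoidal

theorem strictData_triangle_left (m : M) (x : Strictification M C A) :
    (strictData A).η ((strictData A).actObj m x) ≫ (strictData A).μ (𝟙_ M) m x
      = (strictData A).actHom (λ_ m).inv (𝟙 x) := by
  dsimp [strictData, instCategoryStrictification, CategoryStruct.id, CategoryStruct.comp]
  rw [hA.μ'_actHom_μ, hA.actHom_comp_actHom, comp_id]
  congr 1
  monoidal

theorem strictData_triangle_right (m : M) (x : Strictification M C A) :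
    (strictData A).actHom (𝟙 m) ((strictData A).η x) ≫ (strictData A).μ m (𝟙_ M) x
      = (strictData A).actHom (ρ_ m).inv (𝟙 x) := by
  dsimp [strictData, instCategoryStrictification, CategoryStruct.id, CategoryStruct.comp]
  rw [hA.μ'_actHom_μ, hA.μ'_actHom_actHom_μ]
  simp only [hA.actHom_comp_actHom, comp_id]
  congr 1
  monoidal

theorem isLeftActegory_strictData : IsLeftActegory (strictData A) where
  actHom_id m x := by
    dsimp [strictData, instCategoryStrictification, CategoryStruct.id, CategoryStruct.comp]
    rw [hA.actHom_id, id_comp, hA.μ'_iso]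
  actHom_comp g g' f f' := by
    dsimp [strictData, instCategoryStrictification, CategoryStruct.comp]
    simp only [assoc, hA.μ_μ'_assoc, hA.actHom_comp]
  η_iso x := (hA.actIso (λ_ x.m).symm (Iso.refl x.c)).hom_inv_id
  η'_iso x := (hA.actIso (λ_ x.m) (Iso.refl x.c)).hom_inv_id
  μ_iso m n x := (hA.actIso (α_ m n x.m).symm (Iso.refl x.c)).hom_inv_id
  μ'_iso m n x := (hA.actIso (α_ m n x.m) (Iso.refl x.c)).hom_inv_id
  η_nat := hA.strictData_η_nat
  μ_nat := hA.strictData_μ_nat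
  pentagon := hA.strictData_pentagon
  triangle_left := hA.strictData_triangle_left
  triangle_right := hA.strictData_triangle_right

theorem strictFunctor_essSurj : (strictFunctor A).EssSurj :=
  ⟨fun c => ⟨⟨𝟙_ M, c⟩, ⟨⟨A.η' c, A.η c, hA.η'_iso c, hA.η_iso c⟩⟩⟩⟩

theorem isLaxLinear_strictLinearData : IsLaxLinear (strictLinearData A) where
  lin_nat _ _ := (hA.μ_μ'_assoc _).symm
  lin_unit x := hA.triangle_left x.m x.c
  lin_mult m n x := (hA.pentagon_inv m n x.m x.c).symm

end IsLeftActegory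

/-- **strictification.** For any left `M`-actegory `(C, •, η, μ)`:
(a) the category of pairs `(m, c)` with morphisms `m • c ⟶ n • d`, equipped with the
action `m' ⊙ (m, c) := (m' ⊗ m, c)`, is a left `M`-actegory which is strict in the sense
that the action is by tensoring on scalars; and (b) the comparison functor
`S : (m, c) ↦ m • c`, with lineator given by the multiplicator `μ`, is a strong
`M`-linear functor and an equivalence of categories (fully faithful and
essentially surjective). -/
theorem strictification
    (A : LeftActegoryData M C) (hA : IsLeftActegory A) :
    IsLeftActegory (strictData A) ∧
    IsLaxLinear (M := M) (A := strictData A) (B := A)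
      { F := strictFunctor A
        lin := fun m' x =>
          show A.actObj m' (A.actObj x.m x.c) ⟶ A.actObj (m' ⊗ x.m) x.c from
            A.μ m' x.m x.c } ∧
    (∀ (m' : M) (x : Strictification M C A), IsIso (A.μ m' x.m x.c)) ∧
    (strictFunctor A).Full ∧ (strictFunctor A).Faithful ∧ (strictFunctor A).EssSurj :=
  ⟨hA.isLeftActegory_strictData, hA.isLaxLinear_strictLinearData,
    fun m' x => (hA.μIso m' x.m x.c).isIso_hom, inferInstance, inferInstance,
    hA.strictFunctor_essSurj⟩
end

section
/- Let (C, •, ∘, ζ) be an (M,N)-biactegory, for monoidal categories (M, j, ⊗) and (N, i, ⊘). Then the functor (N^rev × M) × C ⥤ C given by ((n,m), c) ↦ (m • c) ∘ n, equipped with the unitor η^•_c ≫ η^∘_{j • c} : c ⟶ (j • c) ∘ i and the multiplicator (ζ_{m, m'•c, n'} ∘ 𝟙_n) ≫ ((μ^•_{m,m',c} ∘ 𝟙_{n'}) ∘ 𝟙_n) ≫ μ^∘_{(m⊗m')•c, n', n} : (m • ((m' • c) ∘ n')) ∘ n ⟶ ((m ⊗ m') • c) ∘ (n' ⊘ n),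 is a left (N^rev × M)-actegory, where N^rev denotes the monoidal opposite of N (N with reversed tensor) and N^rev × M carries the componentwise monoidal structure. -/
open CategoryTheory Category MonoidalCategory

universe v₁ v₂ v₃ u₁ u₂ u₃

variable (M : Type u₁) [Category.{v₁} M] [MonoidalCategory M]
variable (C : Type u₂) [Category.{v₂} C]

variable {M C}

variable (N : Type u₃) [Category.{v₃} N] [MonoidalCategory N]

variable (C) in
/-- The data of a right actegory: an action `∘ : C × N ⥤ C` together with a
unitor `c ≅ c ∘ i`, a multiplicator `(c ∘ n) ∘ m ≅ c ∘ (n ⊗ m)` and their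
(candidate) inverses. -/
structure RightActegoryData where
  actObj : C → N → C
  actHom : ∀ {c d : C} {n n' : N}, (c ⟶ d) → (n ⟶ n') → (actObj c n ⟶ actObj d n')
  η : ∀ c : C, c ⟶ actObj c (𝟙_ N)
  η' : ∀ c : C, actObj c (𝟙_ N) ⟶ c
  μ : ∀ (c : C) (n m : N), actObj (actObj c n) m ⟶ actObj c (n ⊗ m)
  μ' : ∀ (c : C) (n m : N), actObj c (n ⊗ m) ⟶ actObj (actObj c n) m

variable {N}

/-- The laws of a right actegory (i.e. the coherences making it a left actegory
over the monoidal opposite). -/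
structure IsRightActegory (R : RightActegoryData C N) : Prop where
  actHom_id : ∀ (c : C) (n : N), R.actHom (𝟙 c) (𝟙 n) = 𝟙 (R.actObj c n)
  actHom_comp : ∀ {c d e : C} {n p q : N} (f : c ⟶ d) (f' : d ⟶ e) (h : n ⟶ p) (h' : p ⟶ q),
      R.actHom (f ≫ f') (h ≫ h') = R.actHom f h ≫ R.actHom f' h'
  η_iso : ∀ c, R.η c ≫ R.η' c = 𝟙 c
  η'_iso : ∀ c, R.η' c ≫ R.η c = 𝟙 _
  μ_iso : ∀ c n m, R.μ c n m ≫ R.μ' c n m = 𝟙 _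
  μ'_iso : ∀ c n m, R.μ' c n m ≫ R.μ c n m = 𝟙 _
  η_nat : ∀ {c d : C} (f : c ⟶ d), f ≫ R.η d = R.η c ≫ R.actHom f (𝟙 (𝟙_ N))
  μ_nat : ∀ {c c' : C} {n n' m m' : N} (f : c ⟶ c') (h : n ⟶ n') (k : m ⟶ m'),
      R.actHom (R.actHom f h) k ≫ R.μ c' n' m' = R.μ c n m ≫ R.actHom f (h ⊗ₘ k)
  pentagon : ∀ (c : C) (p n m : N),
      R.μ (R.actObj c p) n m ≫ R.μ c p (n ⊗ m) ≫ R.actHom (𝟙 c) (α_ p n m).inv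
        = R.actHom (R.μ c p n) (𝟙 m) ≫ R.μ c (p ⊗ n) m
  triangle_left : ∀ (c : C) (m : N),
      R.η (R.actObj c m) ≫ R.μ c m (𝟙_ N) = R.actHom (𝟙 c) (ρ_ m).inv
  triangle_right : ∀ (c : C) (m : N),
      R.actHom (R.η c) (𝟙 m) ≫ R.μ c (𝟙_ N) m = R.actHom (𝟙 c) (λ_ m).inv

/-- The data of a bimodulator relating a left `M`-action and a right `N`-action on
the same category: a natural isomorphism `ζ : m • (c ∘ n) ≅ (m • c) ∘ n`. -/
structure BimodulatorData (A : LeftActegoryData M C) (R : RightActegoryData C N) where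
  ζ : ∀ (m : M) (c : C) (n : N), A.actObj m (R.actObj c n) ⟶ R.actObj (A.actObj m c) n
  ζ' : ∀ (m : M) (c : C) (n : N), R.actObj (A.actObj m c) n ⟶ A.actObj m (R.actObj c n)

/-- The laws of a biactegory: the bimodulator is a natural isomorphism satisfying
the two pentagon and the two triangle coherence laws relating it to the
structure of the two actions. -/
structure IsBiactegory {A : LeftActegoryData M C} {R : RightActegoryData C N}
    (Z : BimodulatorData A R) : Prop where
  ζ_iso : ∀ m c n, Z.ζ m c n ≫ Z.ζ' m c n = 𝟙 _
  ζ'_iso : ∀ m c n, Z.ζ' m c n ≫ Z.ζ m c n = 𝟙 _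
  ζ_nat : ∀ {m m' : M} {c c' : C} {n n' : N} (g : m ⟶ m') (f : c ⟶ c') (h : n ⟶ n'),
      A.actHom g (R.actHom f h) ≫ Z.ζ m' c' n' = Z.ζ m c n ≫ R.actHom (A.actHom g f) h
  pentagon_left : ∀ (m n : M) (c : C) (p : N),
      A.μ m n (R.actObj c p) ≫ Z.ζ (m ⊗ n) c p
        = A.actHom (𝟙 m) (Z.ζ n c p) ≫ Z.ζ m (A.actObj n c) p ≫ R.actHom (A.μ m n c) (𝟙 p)
  pentagon_right : ∀ (p : M) (c : C) (m n : N),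
      A.actHom (𝟙 p) (R.μ c m n) ≫ Z.ζ p c (m ⊗ n)
        = Z.ζ p (R.actObj c m) n ≫ R.actHom (Z.ζ p c m) (𝟙 n) ≫ R.μ (A.actObj p c) m n
  triangle_unit_left : ∀ (c : C) (m : N),
      A.η (R.actObj c m) ≫ Z.ζ (𝟙_ M) c m = R.actHom (A.η c) (𝟙 m)
  triangle_unit_right : ∀ (m : M) (c : C),
      A.actHom (𝟙 m) (R.η c) ≫ Z.ζ m c (𝟙_ N) = R.η (A.actObj m c)

/-! The action `((n, m), c) ↦ (m • c) ∘ n` inherits each law from the corresponding laws of `•`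
and `∘`, the bimodulator `ζ` being what lets the `M`-action pass the `N`-action. After fusing
composites inside `∘` by functoriality and sliding structure maps past each other by naturality,
every law except the pentagon collapses to one law of `•`, `∘` or `ζ`. In the pentagon, the
pentagon of `∘` absorbs the two outer multiplicators; what is left is an identity under `- ∘ a`
combining the pentagon of `•` with both pentagons of `ζ`. -/

namespace IsRightActegory

variable {R : RightActegoryData C N}

theorem actHom_comp_left (hR : IsRightActegory R) {c d e : C} (f : c ⟶ d) (g : d ⟶ e) (n : N) :
    R.actHom (f ≫ g) (𝟙 n) = R.actHom f (𝟙 n) ≫ R.actHom g (𝟙 n) := by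
  rw [← hR.actHom_comp, comp_id]

theorem actHom_def (hR : IsRightActegory R) {c d : C} {n n' : N} (f : c ⟶ d) (h : n ⟶ n') :
    R.actHom f h = R.actHom f (𝟙 n) ≫ R.actHom (𝟙 d) h := by
  rw [← hR.actHom_comp, comp_id, id_comp]

theorem μ_naturality_left (hR : IsRightActegory R) {c d : C} (f : c ⟶ d) (n m : N) :
    R.actHom (R.actHom f (𝟙 n)) (𝟙 m) ≫ R.μ d n m = R.μ c n m ≫ R.actHom f (𝟙 (n ⊗ m)) := by
  rw [hR.μ_nat, id_tensorHom_id]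

end IsRightActegory

theorem IsLeftActegory.actHom_comp_right {A : LeftActegoryData M C} (hA : IsLeftActegory A)
    (m : M) {c d e : C} (f : c ⟶ d) (g : d ⟶ e) :
    A.actHom (𝟙 m) (f ≫ g) = A.actHom (𝟙 m) f ≫ A.actHom (𝟙 m) g := by
  rw [← hA.actHom_comp, comp_id]

section Biactegory

variable {A : LeftActegoryData M C} {R : RightActegoryData C N} {Z : BimodulatorData A R}

theorem IsBiactegory.mixed_pentagon (hA : IsLeftActegory A) (hR : IsRightActegory R)
    (hZ : IsBiactegory Z) (k l r : M) (c : C) (d b : N) :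
    Z.ζ k (A.actObj l (R.actObj (A.actObj r c) d)) b ≫
        R.actHom (A.μ k l (R.actObj (A.actObj r c) d) ≫ Z.ζ (k ⊗ l) (A.actObj r c) d ≫
          R.actHom (A.μ (k ⊗ l) r c ≫ A.actHom (α_ k l r).hom (𝟙 c)) (𝟙 d)) (𝟙 b) ≫
        R.μ (A.actObj (k ⊗ l ⊗ r) c) d b =
      A.actHom (𝟙 k) (R.actHom (Z.ζ l (A.actObj r c) d ≫ R.actHom (A.μ l r c) (𝟙 d)) (𝟙 b) ≫
          R.μ (A.actObj (l ⊗ r) c) d b) ≫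
        Z.ζ k (A.actObj (l ⊗ r) c) (d ⊗ b) ≫ R.actHom (A.μ k (l ⊗ r) c) (𝟙 (d ⊗ b)) := by
  rw [reassoc_of% hZ.pentagon_left, ← hR.actHom_comp_left (A.μ k l _), hA.pentagon,
    hR.actHom_comp_left, hR.actHom_comp_left]
  simp only [assoc]
  rw [← reassoc_of% hZ.ζ_nat, hR.μ_naturality_left, ← reassoc_of% hZ.pentagon_right]
  simp only [hR.actHom_comp_left, hA.actHom_comp_right, assoc, hR.μ_naturality_left,
    reassoc_of% hZ.ζ_nat]

end Biactegory

open MonoidalOpposite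

namespace BimodulatorData

variable {A : LeftActegoryData M C} {R : RightActegoryData C N}

def productAction (Z : BimodulatorData A R) : LeftActegoryData (Nᴹᵒᵖ × M) C where
  actObj p c := R.actObj (A.actObj p.2 c) p.1.unmop
  actHom g f := R.actHom (A.actHom g.2 f) g.1.unmop
  η c := A.η c ≫ R.η (A.actObj (𝟙_ M) c)
  η' c := R.η' (A.actObj (𝟙_ M) c) ≫ A.η' c
  μ p q c :=
    R.actHom (Z.ζ p.2 (A.actObj q.2 c) q.1.unmop) (𝟙 p.1.unmop)
      ≫ R.actHom (R.actHom (A.μ p.2 q.2 c) (𝟙 q.1.unmop)) (𝟙 p.1.unmop)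
      ≫ R.μ (A.actObj (p.2 ⊗ q.2) c) q.1.unmop p.1.unmop
  μ' p q c :=
    R.μ' (A.actObj (p.2 ⊗ q.2) c) q.1.unmop p.1.unmop
      ≫ R.actHom (R.actHom (A.μ' p.2 q.2 c) (𝟙 q.1.unmop)) (𝟙 p.1.unmop)
      ≫ R.actHom (Z.ζ' p.2 (A.actObj q.2 c) q.1.unmop) (𝟙 p.1.unmop)

variable {Z : BimodulatorData A R}

theorem productAction_μ_comp_μ' (hA : IsLeftActegory A) (hR : IsRightActegory R)
    (hZ : IsBiactegory Z) (p q : Nᴹᵒᵖ × M) (c : C) :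
    Z.productAction.μ p q c ≫ Z.productAction.μ' p q c = 𝟙 _ := by
  simp only [productAction, assoc, reassoc_of% hR.μ_iso, ← reassoc_of% hR.actHom_comp_left,
    ← hR.actHom_comp_left, hA.μ_iso, hR.actHom_id, id_comp, hZ.ζ_iso]

theorem productAction_μ'_comp_μ (hA : IsLeftActegory A) (hR : IsRightActegory R)
    (hZ : IsBiactegory Z) (p q : Nᴹᵒᵖ × M) (c : C) :
    Z.productAction.μ' p q c ≫ Z.productAction.μ p q c = 𝟙 _ := by
  simp only [productAction, assoc, ← reassoc_of% hR.actHom_comp_left, ← hR.actHom_comp_left,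
    reassoc_of% hZ.ζ'_iso, hA.μ'_iso, hR.actHom_id, id_comp, hR.μ'_iso]
  rfl

theorem productAction_μ_nat (hA : IsLeftActegory A) (hR : IsRightActegory R)
    (hZ : IsBiactegory Z) {p p' q q' : Nᴹᵒᵖ × M} {c c' : C} (g : p ⟶ p') (h : q ⟶ q') (f : c ⟶ c') :
    Z.productAction.actHom g (Z.productAction.actHom h f) ≫ Z.productAction.μ p' q' c' =
      Z.productAction.μ p q c ≫ Z.productAction.actHom (g ⊗ₘ h) f := by
  dsimp only [productAction]
  simp only [prodMonoidal_tensorHom, Prod.mkHom, unmop_tensorHom, assoc]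
  rw [← hR.μ_nat]
  simp only [← reassoc_of% hR.actHom_comp, ← hR.actHom_comp, comp_id, id_comp,
    reassoc_of% hZ.ζ_nat, hA.μ_nat]
  rfl

theorem productAction_pentagon (hA : IsLeftActegory A) (hR : IsRightActegory R)
    (hZ : IsBiactegory Z) (m n p : Nᴹᵒᵖ × M) (c : C) :
    Z.productAction.μ m n (Z.productAction.actObj p c) ≫ Z.productAction.μ (m ⊗ n) p c ≫
        Z.productAction.actHom (α_ m n p).hom (𝟙 c) =
      Z.productAction.actHom (𝟙 m) (Z.productAction.μ n p c) ≫ Z.productAction.μ m (n ⊗ p) c := by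
  dsimp only [productAction]
  simp only [prodMonoidal_associator, Iso.prod_hom, Prod.mkHom, unmop_hom_associator, assoc,
    prod_id_fst, prod_id_snd, unmop_id, prodMonoidal_tensorObj, unmop_tensorObj]
  rw [hR.actHom_def (A.actHom _ _) (α_ _ _ _).inv]
  simp only [← reassoc_of% hR.μ_naturality_left, hR.pentagon]
  simp only [← reassoc_of% hR.actHom_comp, ← hR.actHom_comp, comp_id]
  rw [hZ.mixed_pentagon hA hR]

theorem productAction_triangle_left (hA : IsLeftActegory A) (hR : IsRightActegory R)
    (hZ : IsBiactegory Z) (p : Nᴹᵒᵖ × M) (c : C) :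
    Z.productAction.η (Z.productAction.actObj p c) ≫ Z.productAction.μ (𝟙_ _) p c =
      Z.productAction.actHom (λ_ p).inv (𝟙 c) := by
  dsimp only [productAction]
  simp only [prodMonoidal_tensorUnit, unmop_tensorUnit, prodMonoidal_leftUnitor, Iso.prod_inv,
    Prod.mkHom, unmop_inv_leftUnitor, assoc, ← reassoc_of% hR.η_nat,
    reassoc_of% hZ.triangle_unit_left, ← reassoc_of% hR.actHom_comp, hR.triangle_left,
    ← hR.actHom_comp, hA.triangle_left, comp_id, id_comp]

theorem productAction_triangle_right (hA : IsLeftActegory A) (hR : IsRightActegory R)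
    (hZ : IsBiactegory Z) (p : Nᴹᵒᵖ × M) (c : C) :
    Z.productAction.actHom (𝟙 p) (Z.productAction.η c) ≫ Z.productAction.μ p (𝟙_ _) c =
      Z.productAction.actHom (ρ_ p).inv (𝟙 c) := by
  dsimp only [productAction]
  simp only [prodMonoidal_tensorUnit, unmop_tensorUnit, prodMonoidal_rightUnitor, Iso.prod_inv,
    Prod.mkHom, unmop_inv_rightUnitor, prod_id_fst, prod_id_snd, unmop_id, hA.actHom_comp_right]
  simp only [← reassoc_of% hR.actHom_comp_left, assoc,
    reassoc_of% hZ.triangle_unit_right, ← hR.η_nat, reassoc_of% hA.triangle_right]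
  rw [hR.actHom_comp_left, assoc, hR.triangle_right, ← hR.actHom_comp, comp_id, id_comp]

end BimodulatorData

open BimodulatorData

/-- Given an `(M,N)`-biactegory `(C, •, ∘, ζ)`, the functor
`((n,m), c) ↦ (m • c) ∘ n`, equipped with the unitor `η^• ≫ η^∘` and the
multiplicator `(ζ ∘ 𝟙) ≫ ((μ^• ∘ 𝟙) ∘ 𝟙) ≫ μ^∘`, is a left `(Nᴹᵒᵖ × M)`-actegory,
where `Nᴹᵒᵖ` is the monoidal opposite of `N` and `Nᴹᵒᵖ × M` carries the
componentwise monoidal structure. -/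
theorem biactegory_gives_product_actegory
    (A : LeftActegoryData M C) (hA : IsLeftActegory A)
    (R : RightActegoryData C N) (hR : IsRightActegory R)
    (Z : BimodulatorData A R) (hZ : IsBiactegory Z) :
    IsLeftActegory (M := Nᴹᵒᵖ × M) (C := C)
      { actObj := fun p c => R.actObj (A.actObj p.2 c) p.1.unmop
        actHom := fun g f => R.actHom (A.actHom g.2 f) g.1.unmop
        η := fun c => A.η c ≫ R.η (A.actObj (𝟙_ M) c)
        η' := fun c => R.η' (A.actObj (𝟙_ M) c) ≫ A.η' c
        μ := fun p q c =>
          R.actHom (Z.ζ p.2 (A.actObj q.2 c) q.1.unmop) (𝟙 p.1.unmop)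
            ≫ R.actHom (R.actHom (A.μ p.2 q.2 c) (𝟙 q.1.unmop)) (𝟙 p.1.unmop)
            ≫ R.μ (A.actObj (p.2 ⊗ q.2) c) q.1.unmop p.1.unmop
        μ' := fun p q c =>
          R.μ' (A.actObj (p.2 ⊗ q.2) c) q.1.unmop p.1.unmop
            ≫ R.actHom (R.actHom (A.μ' p.2 q.2 c) (𝟙 q.1.unmop)) (𝟙 p.1.unmop)
            ≫ R.actHom (Z.ζ' p.2 (A.actObj q.2 c) q.1.unmop) (𝟙 p.1.unmop) } :=
  show IsLeftActegory Z.productAction from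
  { actHom_id := fun p c => by
      simp only [productAction, prod_id_fst, prod_id_snd, unmop_id, hA.actHom_id, hR.actHom_id]
    actHom_comp := fun g g' f f' => by
      simp only [productAction, prod_comp_fst, prod_comp_snd, unmop_comp, hA.actHom_comp,
        hR.actHom_comp]
    η_iso := fun c => by simp only [productAction, assoc, reassoc_of% hR.η_iso, hA.η_iso]
    η'_iso := fun c => by
      simp only [productAction, assoc, reassoc_of% hA.η'_iso, hR.η'_iso]
      rfl
    μ_iso := productAction_μ_comp_μ' hA hR hZ
    μ'_iso := productAction_μ'_comp_μ hA hR hZ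
    η_nat := fun f => by
      dsimp only [productAction]
      simp only [prodMonoidal_tensorUnit, prod_id_fst, prod_id_snd, unmop_id, unmop_tensorUnit]
      rw [reassoc_of% hA.η_nat, hR.η_nat, assoc]
    μ_nat := productAction_μ_nat hA hR hZ
    pentagon := productAction_pentagon hA hR hZ
    triangle_left := productAction_triangle_left hA hR hZ
    triangle_right := productAction_triangle_right hA hR hZ }
end

section
/- Let (M, j, ⊗, σ) be a symmetric monoidal category, (C, i, ⊠, β) a braided monoidal category, and (C, •, η, μ, ι) a braided monoidal M-actegory. Then for every object m of M, the object m • i lies in the symmetric center of C: for every object d of C, β_{m • i, d} ≫ β_{d, m • i} = 𝟙_{(m • i) ⊠ d}. -/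
open CategoryTheory Category MonoidalCategory

universe v₁ v₂ v₃ u₁ u₂ u₃

variable (M : Type u₁) [Category.{v₁} M] [MonoidalCategory M]
variable (C : Type u₂) [Category.{v₂} C]

variable {M C}

variable [MonoidalCategory C]

variable (M C) in
/-- The data of a mixed interchanger for a left `M`-actegory on a monoidal
category `C`: a morphism `ι : (m ⊗ n) • (c ⊠ d) ⟶ (m • c) ⊠ (n • d)` together with
its (candidate) inverse. -/
structure InterchangerData (A : LeftActegoryData M C) where
  ι : ∀ (m n : M) (c d : C), A.actObj (m ⊗ n) (c ⊗ d) ⟶ A.actObj m c ⊗ A.actObj n d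
  ι' : ∀ (m n : M) (c d : C), A.actObj m c ⊗ A.actObj n d ⟶ A.actObj (m ⊗ n) (c ⊗ d)

/-- The laws of a monoidal `M`-actegory (`M` braided): the mixed interchanger is a
natural isomorphism satisfying the coherences (I)–(IV) with respect to the
associators and unitors of `M` and `C`, the unitor `η` and the multiplicator `μ`. -/
structure IsMonoidalActegory [BraidedCategory M]
    {A : LeftActegoryData M C} (I : InterchangerData M C A) : Prop where
  ι_iso : ∀ m n c d, I.ι m n c d ≫ I.ι' m n c d = 𝟙 _
  ι'_iso : ∀ m n c d, I.ι' m n c d ≫ I.ι m n c d = 𝟙 _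
  ι_nat : ∀ {m m' n n' : M} {c c' d d' : C} (g : m ⟶ m') (h : n ⟶ n')
      (f : c ⟶ c') (f' : d ⟶ d'),
      A.actHom (g ⊗ₘ h) (f ⊗ₘ f') ≫ I.ι m' n' c' d'
        = I.ι m n c d ≫ (A.actHom g f ⊗ₘ A.actHom h f')
  assoc : ∀ (m n p : M) (a b c : C),
      I.ι (m ⊗ n) p (a ⊗ b) c ≫ (I.ι m n a b ⊗ₘ 𝟙 (A.actObj p c))
          ≫ (α_ (A.actObj m a) (A.actObj n b) (A.actObj p c)).hom
        = A.actHom (α_ m n p).hom (α_ a b c).hom ≫ I.ι m (n ⊗ p) a (b ⊗ c)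
          ≫ (𝟙 (A.actObj m a) ⊗ₘ I.ι n p b c)
  unit_left : ∀ (m : M) (x : C),
      I.ι (𝟙_ M) m (𝟙_ C) x ≫ (A.η' (𝟙_ C) ⊗ₘ 𝟙 (A.actObj m x))
          ≫ (λ_ (A.actObj m x)).hom
        = A.actHom (λ_ m).hom (λ_ x).hom
  unit_right : ∀ (m : M) (x : C),
      I.ι m (𝟙_ M) x (𝟙_ C) ≫ (𝟙 (A.actObj m x) ⊗ₘ A.η' (𝟙_ C))
          ≫ (ρ_ (A.actObj m x)).hom
        = A.actHom (ρ_ m).hom (ρ_ x).hom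
  η_monoidal : ∀ (c d : C),
      A.actHom (λ_ (𝟙_ M)).hom (𝟙 (c ⊗ d)) ≫ A.η' (c ⊗ d)
        = I.ι (𝟙_ M) (𝟙_ M) c d ≫ (A.η' c ⊗ₘ A.η' d)
  μ_monoidal : ∀ (m n m' n' : M) (c d : C),
      A.actHom (𝟙 (m ⊗ n)) (I.ι m' n' c d) ≫ I.ι m n (A.actObj m' c) (A.actObj n' d)
          ≫ (A.μ m m' c ⊗ₘ A.μ n n' d)
        = A.μ (m ⊗ n) (m' ⊗ n') (c ⊗ d) ≫ A.actHom (tensorμ m n m' n') (𝟙 (c ⊗ d))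
          ≫ I.ι (m ⊗ m') (n ⊗ n') c d

/-- The derived strength `χ_{m,c,d} : m • (c ⊠ d) ⟶ (m • c) ⊠ d`. -/
def chi {A : LeftActegoryData M C} (I : InterchangerData M C A) (m : M) (c d : C) :
    A.actObj m (c ⊗ d) ⟶ A.actObj m c ⊗ d :=
  A.actHom (ρ_ m).inv (𝟙 (c ⊗ d)) ≫ I.ι m (𝟙_ M) c d ≫ (𝟙 (A.actObj m c) ⊗ₘ A.η' d)

/-- The inverse of the derived strength `χ`. -/
def chiInv {A : LeftActegoryData M C} (I : InterchangerData M C A) (m : M) (c d : C) :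
    A.actObj m c ⊗ d ⟶ A.actObj m (c ⊗ d) :=
  (𝟙 (A.actObj m c) ⊗ₘ A.η d) ≫ I.ι' m (𝟙_ M) c d ≫ A.actHom (ρ_ m).hom (𝟙 (c ⊗ d))

/-- The derived strength `κ_{m,c,d} : m • (c ⊠ d) ⟶ c ⊠ (m • d)`. -/
def kappa {A : LeftActegoryData M C} (I : InterchangerData M C A) (m : M) (c d : C) :
    A.actObj m (c ⊗ d) ⟶ c ⊗ A.actObj m d :=
  A.actHom (λ_ m).inv (𝟙 (c ⊗ d)) ≫ I.ι (𝟙_ M) m c d ≫ (A.η' c ⊗ₘ 𝟙 (A.actObj m d))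

/-- The inverse of the derived strength `κ`. -/
def kappaInv {A : LeftActegoryData M C} (I : InterchangerData M C A) (m : M) (c d : C) :
    c ⊗ A.actObj m d ⟶ A.actObj m (c ⊗ d) :=
  (A.η c ⊗ₘ 𝟙 (A.actObj m d)) ≫ I.ι' (𝟙_ M) m c d ≫ A.actHom (λ_ m).hom (𝟙 (c ⊗ d))

/-
Through the interchanger `ι`, the braiding `β_{m•c, n•d}` is conjugate to `σ_{m,n} • β_{c,d}`.
Braiding back and using `σ_{m,n} ≫ σ_{n,m} = 𝟙`, the double braiding of `m • c` with `n • d` is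
conjugate to `𝟙 • (β_{c,d} ≫ β_{d,c})`. For `c = i` this is trivial, since the unit of a braided
category lies in its symmetric center. So `m • i` double-braids trivially with every `j • d`,
hence, via `η_d : d ≅ j • d`, with every `d`.
-/

section BraidedCategory

variable [BraidedCategory C]

theorem braiding_tensorUnit_hom_comp_braiding_hom (X : C) :
    (β_ (𝟙_ C) X).hom ≫ (β_ X (𝟙_ C)).hom = 𝟙 (𝟙_ C ⊗ X) := by
  simp [braiding_tensorUnit_left, braiding_tensorUnit_right]

theorem braiding_hom_comp_braiding_hom_eq_id_of_iso {X Y Y' : C} (e : Y ≅ Y')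
    (h : (β_ X Y').hom ≫ (β_ Y' X).hom = 𝟙 (X ⊗ Y')) :
    (β_ X Y).hom ≫ (β_ Y X).hom = 𝟙 (X ⊗ Y) := by
  have hconj : (β_ X Y).hom ≫ (β_ Y X).hom
      = X ◁ e.hom ≫ ((β_ X Y').hom ≫ (β_ Y' X).hom) ≫ X ◁ e.inv := by
    rw [Category.assoc, BraidedCategory.braiding_naturality_right_assoc,
      BraidedCategory.braiding_naturality_left_assoc, ← whiskerLeft_comp, e.hom_inv_id,
      whiskerLeft_id, Category.comp_id]
  rw [hconj, h, Category.id_comp, ← whiskerLeft_comp, e.hom_inv_id, whiskerLeft_id]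

end BraidedCategory

namespace LeftActegoryData

variable (A : LeftActegoryData M C)

def ηIso (hA : IsLeftActegory A) (c : C) : c ≅ A.actObj (𝟙_ M) c :=
  ⟨A.η c, A.η' c, hA.η_iso c, hA.η'_iso c⟩

def IsBraidedInterchanger [BraidedCategory M] [BraidedCategory C]
    (I : InterchangerData M C A) : Prop :=
  ∀ (m n : M) (c d : C),
    A.actHom (β_ m n).hom (β_ c d).hom ≫ I.ι n m d c
      = I.ι m n c d ≫ (β_ (A.actObj m c) (A.actObj n d)).hom

end LeftActegoryData

namespace IsMonoidalActegory

variable {A : LeftActegoryData M C}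

theorem braiding_actObj [BraidedCategory M] [BraidedCategory C] {I : InterchangerData M C A}
    (hI : IsMonoidalActegory I) (hbraid : A.IsBraidedInterchanger I) (m n : M) (c d : C) :
    (β_ (A.actObj m c) (A.actObj n d)).hom
      = I.ι' m n c d ≫ A.actHom (β_ m n).hom (β_ c d).hom ≫ I.ι n m d c := by
  rw [hbraid, ← Category.assoc, hI.ι'_iso, Category.id_comp]

theorem braiding_actObj_comp_braiding_actObj [SymmetricCategory M] [BraidedCategory C]
    {I : InterchangerData M C A} (hI : IsMonoidalActegory I) (hA : IsLeftActegory A)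
    (hbraid : A.IsBraidedInterchanger I) (m n : M) (c d : C) :
    (β_ (A.actObj m c) (A.actObj n d)).hom ≫ (β_ (A.actObj n d) (A.actObj m c)).hom
      = I.ι' m n c d ≫ A.actHom (𝟙 (m ⊗ n)) ((β_ c d).hom ≫ (β_ d c).hom)
          ≫ I.ι m n c d := by
  rw [hI.braiding_actObj hbraid, hI.braiding_actObj hbraid n m d c]
  simp only [Category.assoc]
  rw [reassoc_of% hI.ι_iso, ← reassoc_of% hA.actHom_comp, SymmetricCategory.symmetry]

end IsMonoidalActegory

/-- **Statement 16.** Let `M` be symmetric, `C` braided, and `(C, •, η, μ, ι)` a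
braided monoidal `M`-actegory (the interchanger is compatible with the symmetry of
`M` and the braiding of `C`). Then for every scalar `m`, the object `m • i` lies in
the symmetric center of `C`: braiding twice with `m • i` is the identity. -/
theorem braidedActegory_actUnit_in_symmetricCenter
    [BraidedCategory C] [SymmetricCategory M]
    (A : LeftActegoryData M C) (hA : IsLeftActegory A)
    (I : InterchangerData M C A) (hI : IsMonoidalActegory I)
    (hbraid : ∀ (m n : M) (c d : C),
      A.actHom (β_ m n).hom (β_ c d).hom ≫ I.ι n m d c
        = I.ι m n c d ≫ (β_ (A.actObj m c) (A.actObj n d)).hom) :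
    ∀ (m : M) (d : C),
      (β_ (A.actObj m (𝟙_ C)) d).hom ≫ (β_ d (A.actObj m (𝟙_ C))).hom
        = 𝟙 (A.actObj m (𝟙_ C) ⊗ d) := by
  intro m d
  have hactUnit := hI.braiding_actObj_comp_braiding_actObj hA hbraid m (𝟙_ M) (𝟙_ C) d
  rw [braiding_tensorUnit_hom_comp_braiding_hom, hA.actHom_id, Category.id_comp,
    hI.ι'_iso] at hactUnit
  exact braiding_hom_comp_braiding_hom_eq_id_of_iso (A.ηIso hA d) hactUnit
end
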